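/- Let ψ, B : ℝ³ → ℝ be smooth (C^∞) functions of (t, x, y), 1-periodic in x and in y, let θ ∈ ℝ and let a, R ∈ ℝ with R ≠ 0. Set ω := −Δψ + (a/R) B. Suppose the Casimir-dissipative equations of 2D incompressible Hall MHD (enstrophy Casimir C = ½∫ω², L = Id) hold at every point: ∂_t(−Δψ) + {−Δψ, ψ} = − θ {{ψ, ω}, ψ} and ∂_t B + {B, ψ} = 0. Then for every t ∈ ℝ, the function t ↦ ½ ∫_{[0,1]²} ω(t, x, y)² dx dy is differentiable with derivative − θ ∫_{[0,1]²} {ψ, ω}(t, x, y)² dx dy. -/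

import Mathlib

open MeasureTheory

/-- Partial derivative in the time variable `t` of a function of `(t, x, y)`. -/
noncomputable def pdt (f : ℝ × ℝ × ℝ → ℝ) (p : ℝ × ℝ × ℝ) : ℝ :=
  deriv (fun s => f (s, p.2.1, p.2.2)) p.1

/-- Partial derivative in the first spatial variable `x`. -/
noncomputable def pdx (f : ℝ × ℝ × ℝ → ℝ) (p : ℝ × ℝ × ℝ) : ℝ :=
  deriv (fun s => f (p.1, s, p.2.2)) p.2.1

/-- Partial derivative in the second spatial variable `y`. -/
noncomputable def pdy (f : ℝ × ℝ × ℝ → ℝ) (p : ℝ × ℝ × ℝ) : ℝ :=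
  deriv (fun s => f (p.1, p.2.1, s)) p.2.2

/-- The canonical (Jacobian) bracket `{f, g} = ∂ₓf ∂_y g − ∂_y f ∂ₓ g` in the spatial
variables. -/
noncomputable def jacBracket (f g : ℝ × ℝ × ℝ → ℝ) (p : ℝ × ℝ × ℝ) : ℝ :=
  pdx f p * pdy g p - pdy f p * pdx g p

/-- The spatial Laplacian `Δ = ∂ₓ² + ∂_y²`. -/
noncomputable def spatialLap (f : ℝ × ℝ × ℝ → ℝ) (p : ℝ × ℝ × ℝ) : ℝ :=
  pdx (pdx f) p + pdy (pdy f) p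

/-!
Along the flow, `ω = -Δψ + (a/R) B` obeys `∂ₜω + {ω, ψ} = -θ {{ψ, ω}, ψ}`: add the two
equations with weights `1` and `a/R`. Writing `χ = {ψ, ω}` and `Φ = ω²/2 + θ ω χ`, the Leibniz
rule and antisymmetry of the bracket give `ω ∂ₜω = -{Φ, ψ} - θ χ²`. A bracket
`{Φ, ψ} = ∂ₓ(Φ ∂_y ψ) - ∂_y(Φ ∂ₓ ψ)` is a divergence, so it integrates to zero over a period
cell, and differentiating under the integral sign gives `d/dt ½∫ω² = ∫ω ∂ₜω = -θ ∫χ²`.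
-/

open Filter Function Set

section PartialDerivatives

variable {f g : ℝ × ℝ × ℝ → ℝ} {p : ℝ × ℝ × ℝ}

theorem pdt_eq_fderiv (hf : DifferentiableAt ℝ f p) : pdt f p = fderiv ℝ f p (1, 0, 0) :=
  (hf.hasFDerivAt.comp_hasDerivAt (f := fun s => (s, p.2.1, p.2.2)) p.1
    ((hasDerivAt_id _).prodMk ((hasDerivAt_const _ _).prodMk (hasDerivAt_const _ _)))).deriv

theorem pdx_eq_fderiv (hf : DifferentiableAt ℝ f p) : pdx f p = fderiv ℝ f p (0, 1, 0) :=
  (hf.hasFDerivAt.comp_hasDerivAt (f := fun s => (p.1, s, p.2.2)) p.2.1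
    ((hasDerivAt_const _ _).prodMk ((hasDerivAt_id _).prodMk (hasDerivAt_const _ _)))).deriv

theorem pdy_eq_fderiv (hf : DifferentiableAt ℝ f p) : pdy f p = fderiv ℝ f p (0, 0, 1) :=
  (hf.hasFDerivAt.comp_hasDerivAt (f := fun s => (p.1, p.2.1, s)) p.2.2
    ((hasDerivAt_const _ _).prodMk ((hasDerivAt_const _ _).prodMk (hasDerivAt_id _)))).deriv

theorem hasDerivAt_pdt (hf : DifferentiableAt ℝ f p) :
    HasDerivAt (fun s => f (s, p.2.1, p.2.2)) (pdt f p) p.1 :=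
  (hf.comp (𝕜 := ℝ) p.1 (by fun_prop)).hasDerivAt

theorem hasDerivAt_pdx (hf : DifferentiableAt ℝ f p) :
    HasDerivAt (fun s => f (p.1, s, p.2.2)) (pdx f p) p.2.1 :=
  (hf.comp (𝕜 := ℝ) p.2.1 (by fun_prop)).hasDerivAt

theorem hasDerivAt_pdy (hf : DifferentiableAt ℝ f p) :
    HasDerivAt (fun s => f (p.1, p.2.1, s)) (pdy f p) p.2.2 :=
  (hf.comp (𝕜 := ℝ) p.2.2 (by fun_prop)).hasDerivAt

theorem pdt_add (hf : DifferentiableAt ℝ f p) (hg : DifferentiableAt ℝ g p) :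
    pdt (fun q => f q + g q) p = pdt f p + pdt g p :=
  ((hasDerivAt_pdt hf).add (hasDerivAt_pdt hg)).deriv

theorem pdt_const_mul (c : ℝ) (hf : DifferentiableAt ℝ f p) :
    pdt (fun q => c * f q) p = c * pdt f p :=
  ((hasDerivAt_pdt hf).const_mul c).deriv

theorem pdt_sq (hf : DifferentiableAt ℝ f p) :
    pdt (fun q => f q ^ 2) p = 2 * (f p * pdt f p) :=
  ((hasDerivAt_pdt hf).fun_pow 2).deriv.trans (by norm_num; ring)

theorem pdx_add (hf : DifferentiableAt ℝ f p) (hg : DifferentiableAt ℝ g p) :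
    pdx (fun q => f q + g q) p = pdx f p + pdx g p :=
  ((hasDerivAt_pdx hf).add (hasDerivAt_pdx hg)).deriv

theorem pdx_const_mul (c : ℝ) (hf : DifferentiableAt ℝ f p) :
    pdx (fun q => c * f q) p = c * pdx f p :=
  ((hasDerivAt_pdx hf).const_mul c).deriv

theorem pdx_mul (hf : DifferentiableAt ℝ f p) (hg : DifferentiableAt ℝ g p) :
    pdx (fun q => f q * g q) p = pdx f p * g p + f p * pdx g p :=
  ((hasDerivAt_pdx hf).mul (hasDerivAt_pdx hg)).deriv

theorem pdy_add (hf : DifferentiableAt ℝ f p) (hg : DifferentiableAt ℝ g p) :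
    pdy (fun q => f q + g q) p = pdy f p + pdy g p :=
  ((hasDerivAt_pdy hf).add (hasDerivAt_pdy hg)).deriv

theorem pdy_const_mul (c : ℝ) (hf : DifferentiableAt ℝ f p) :
    pdy (fun q => c * f q) p = c * pdy f p :=
  ((hasDerivAt_pdy hf).const_mul c).deriv

theorem pdy_mul (hf : DifferentiableAt ℝ f p) (hg : DifferentiableAt ℝ g p) :
    pdy (fun q => f q * g q) p = pdy f p * g p + f p * pdy g p :=
  ((hasDerivAt_pdy hf).mul (hasDerivAt_pdy hg)).deriv

section Smoothness

variable {m n : WithTop ℕ∞}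

theorem contDiff_pdt (hf : ContDiff ℝ n f) (hmn : m + 1 ≤ n) : ContDiff ℝ m (pdt f) := by
  have hdiff := hf.differentiable (by rintro rfl; simp at hmn)
  rw [show pdt f = fun p => fderiv ℝ f p (1, 0, 0) from funext fun p => pdt_eq_fderiv (hdiff p)]
  exact (hf.fderiv_right hmn).clm_apply contDiff_const

theorem contDiff_pdx (hf : ContDiff ℝ n f) (hmn : m + 1 ≤ n) : ContDiff ℝ m (pdx f) := by
  have hdiff := hf.differentiable (by rintro rfl; simp at hmn)
  rw [show pdx f = fun p => fderiv ℝ f p (0, 1, 0) from funext fun p => pdx_eq_fderiv (hdiff p)]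
  exact (hf.fderiv_right hmn).clm_apply contDiff_const

theorem contDiff_pdy (hf : ContDiff ℝ n f) (hmn : m + 1 ≤ n) : ContDiff ℝ m (pdy f) := by
  have hdiff := hf.differentiable (by rintro rfl; simp at hmn)
  rw [show pdy f = fun p => fderiv ℝ f p (0, 0, 1) from funext fun p => pdy_eq_fderiv (hdiff p)]
  exact (hf.fderiv_right hmn).clm_apply contDiff_const

theorem contDiff_jacBracket (hf : ContDiff ℝ n f) (hg : ContDiff ℝ n g) (hmn : m + 1 ≤ n) :
    ContDiff ℝ m (jacBracket f g) :=
  ((contDiff_pdx hf hmn).mul (contDiff_pdy hg hmn)).sub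
    ((contDiff_pdy hf hmn).mul (contDiff_pdx hg hmn))

theorem contDiff_spatialLap (hf : ContDiff ℝ n f) (hmn : m + 2 ≤ n) :
    ContDiff ℝ m (spatialLap f) := by
  rw [show m + 2 = m + 1 + 1 by rw [add_assoc]; norm_num] at hmn
  exact (contDiff_pdx (contDiff_pdx hf hmn) le_rfl).add
    (contDiff_pdy (contDiff_pdy hf hmn) le_rfl)

end Smoothness

theorem pdx_pdy_comm (hf : ContDiff ℝ 2 f) : pdx (pdy f) p = pdy (pdx f) p := by
  have hdiff : Differentiable ℝ f := hf.differentiable two_ne_zero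
  have hdiff2 : Differentiable ℝ (fderiv ℝ f) :=
    (hf.fderiv_right (m := 1) le_rfl).differentiable one_ne_zero
  have h1 : pdy f = fun q => fderiv ℝ f q (0, 0, 1) := funext fun q => pdy_eq_fderiv (hdiff q)
  have h2 : pdx f = fun q => fderiv ℝ f q (0, 1, 0) := funext fun q => pdx_eq_fderiv (hdiff q)
  rw [pdx_eq_fderiv ((contDiff_pdy hf (m := 1) le_rfl).differentiable one_ne_zero p),
    pdy_eq_fderiv ((contDiff_pdx hf (m := 1) le_rfl).differentiable one_ne_zero p), h1, h2,
    fderiv_clm_apply (hdiff2 p) (differentiableAt_const _),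
    fderiv_clm_apply (hdiff2 p) (differentiableAt_const _)]
  simpa using (hf.contDiffAt.isSymmSndFDerivAt (by simp)) (0, 1, 0) (0, 0, 1)

end PartialDerivatives

section JacobiBracket

variable {f g h : ℝ × ℝ × ℝ → ℝ} {p : ℝ × ℝ × ℝ}

theorem jacBracket_add_left (hf : DifferentiableAt ℝ f p) (hg : DifferentiableAt ℝ g p) :
    jacBracket (fun q => f q + g q) h p = jacBracket f h p + jacBracket g h p := by
  simp only [jacBracket, pdx_add hf hg, pdy_add hf hg]
  ring

theorem jacBracket_const_mul_left (c : ℝ) (hf : DifferentiableAt ℝ f p) :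
    jacBracket (fun q => c * f q) h p = c * jacBracket f h p := by
  simp only [jacBracket, pdx_const_mul c hf, pdy_const_mul c hf]
  ring

theorem jacBracket_mul_left (hf : DifferentiableAt ℝ f p) (hg : DifferentiableAt ℝ g p) :
    jacBracket (fun q => f q * g q) h p = f p * jacBracket g h p + g p * jacBracket f h p := by
  simp only [jacBracket, pdx_mul hf hg, pdy_mul hf hg]
  ring

theorem jacBracket_antisymm : jacBracket f g p = -jacBracket g f p := by
  simp only [jacBracket]
  ring

theorem jacBracket_eq_pdx_sub_pdy (hf : DifferentiableAt ℝ f p) (hg : ContDiff ℝ 2 g) :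
    jacBracket f g p = pdx (fun q => f q * pdy g q) p - pdy (fun q => f q * pdx g q) p := by
  have hpdx := (contDiff_pdx hg (m := 1) le_rfl).differentiable one_ne_zero p
  have hpdy := (contDiff_pdy hg (m := 1) le_rfl).differentiable one_ne_zero p
  rw [pdx_mul hf hpdy, pdy_mul hf hpdx, pdx_pdy_comm hg, jacBracket]
  ring

end JacobiBracket

section Periodicity

variable {f g : ℝ × ℝ × ℝ → ℝ} {c : ℝ × ℝ × ℝ}

theorem periodic_pdx (hf : Periodic f c) : Periodic (pdx f) c := by
  intro p
  have hslice : (fun s => f ((p + c).1, s, (p + c).2.2)) = fun s => f (p.1, s - c.2.1, p.2.2) :=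
    funext fun s => by
      rw [← hf (p.1, s - c.2.1, p.2.2)]
      congr 1
      ext <;> simp
  show deriv _ (p + c).2.1 = _
  rw [hslice, deriv_comp_sub_const (f := fun s => f (p.1, s, p.2.2))]
  simp [pdx]

theorem periodic_pdy (hf : Periodic f c) : Periodic (pdy f) c := by
  intro p
  have hslice : (fun s => f ((p + c).1, (p + c).2.1, s)) = fun s => f (p.1, p.2.1, s - c.2.2) :=
    funext fun s => by
      rw [← hf (p.1, p.2.1, s - c.2.2)]
      congr 1
      ext <;> simp
  show deriv _ (p + c).2.2 = _
  rw [hslice, deriv_comp_sub_const (f := fun s => f (p.1, p.2.1, s))]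
  simp [pdy]

theorem periodic_jacBracket (hf : Periodic f c) (hg : Periodic g c) :
    Periodic (jacBracket f g) c :=
  ((periodic_pdx hf).mul (periodic_pdy hg)).sub ((periodic_pdy hf).mul (periodic_pdx hg))

theorem periodic_spatialLap (hf : Periodic f c) : Periodic (spatialLap f) c :=
  (periodic_pdx (periodic_pdx hf)).add (periodic_pdy (periodic_pdy hf))

theorem periodic_x_of_forall_add_one (hf : ∀ t x y : ℝ, f (t, x + 1, y) = f (t, x, y)) :
    Periodic f (0, 1, 0) :=
  fun ⟨t, x, y⟩ => by simpa using hf t x y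

theorem periodic_y_of_forall_add_one (hf : ∀ t x y : ℝ, f (t, x, y + 1) = f (t, x, y)) :
    Periodic f (0, 0, 1) :=
  fun ⟨t, x, y⟩ => by simpa using hf t x y

end Periodicity

section Integrals

variable {f g : ℝ × ℝ × ℝ → ℝ}

theorem continuous_pdt (hf : ContDiff ℝ 1 f) : Continuous (pdt f) :=
  (contDiff_pdt hf (m := 0) (by simp)).continuous

theorem continuous_pdx (hf : ContDiff ℝ 1 f) : Continuous (pdx f) :=
  (contDiff_pdx hf (m := 0) (by simp)).continuous

theorem continuous_pdy (hf : ContDiff ℝ 1 f) : Continuous (pdy f) :=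
  (contDiff_pdy hf (m := 0) (by simp)).continuous

theorem integrableOn_slice (hf : Continuous f) {K : Set (ℝ × ℝ)} (hK : IsCompact K) (t : ℝ) :
    IntegrableOn (fun q : ℝ × ℝ => f (t, q.1, q.2)) K :=
  (hf.comp (by fun_prop)).continuousOn.integrableOn_compact hK

theorem integral_Icc_deriv_eq_zero_of_periodic {u u' : ℝ → ℝ}
    (hu : ∀ x, HasDerivAt u (u' x) x) (hu' : Continuous u') (hper : Periodic u 1) :
    ∫ x in Icc (0 : ℝ) 1, u' x = 0 := by
  rw [integral_Icc_eq_integral_Ioc, ← intervalIntegral.integral_of_le zero_le_one,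
    intervalIntegral.integral_eq_sub_of_hasDerivAt (fun x _ => hu x) (hu'.intervalIntegrable 0 1),
    ← zero_add 1, hper, sub_self]

theorem integral_pdx_eq_zero (hf : ContDiff ℝ 1 f) (hper : Periodic f (0, 1, 0)) (t : ℝ) :
    ∫ q in Icc (0 : ℝ) 1 ×ˢ Icc (0 : ℝ) 1, pdx f (t, q.1, q.2) = 0 := by
  have hint : IntegrableOn (fun q : ℝ × ℝ => pdx f (t, q.1, q.2)) (Icc 0 1 ×ˢ Icc 0 1) :=
    integrableOn_slice (continuous_pdx hf) (isCompact_Icc.prod isCompact_Icc) t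
  rw [IntegrableOn, Measure.volume_eq_prod, ← Measure.prod_restrict] at hint
  have hdiff := hf.differentiable one_ne_zero
  have hslice (y : ℝ) : ∫ x in Icc (0 : ℝ) 1, pdx f (t, x, y) = 0 :=
    integral_Icc_deriv_eq_zero_of_periodic (u := fun x => f (t, x, y))
      (fun x => hasDerivAt_pdx (hdiff (t, x, y)))
      ((continuous_pdx hf).comp (by fun_prop)) (fun x => by simpa using hper (t, x, y))
  rw [Measure.volume_eq_prod, ← Measure.prod_restrict, integral_prod_symm _ hint]
  simp only [hslice, integral_zero]

theorem integral_pdy_eq_zero (hf : ContDiff ℝ 1 f) (hper : Periodic f (0, 0, 1)) (t : ℝ) :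
    ∫ q in Icc (0 : ℝ) 1 ×ˢ Icc (0 : ℝ) 1, pdy f (t, q.1, q.2) = 0 := by
  have hint : IntegrableOn (fun q : ℝ × ℝ => pdy f (t, q.1, q.2)) (Icc 0 1 ×ˢ Icc 0 1) :=
    integrableOn_slice (continuous_pdy hf) (isCompact_Icc.prod isCompact_Icc) t
  rw [Measure.volume_eq_prod] at hint
  have hdiff := hf.differentiable one_ne_zero
  have hslice (x : ℝ) : ∫ y in Icc (0 : ℝ) 1, pdy f (t, x, y) = 0 :=
    integral_Icc_deriv_eq_zero_of_periodic (u := fun y => f (t, x, y))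
      (fun y => hasDerivAt_pdy (hdiff (t, x, y)))
      ((continuous_pdy hf).comp (by fun_prop)) (fun y => by simpa using hper (t, x, y))
  rw [Measure.volume_eq_prod, setIntegral_prod _ hint]
  simp only [hslice, integral_zero]

theorem integral_jacBracket_eq_zero (hf : ContDiff ℝ 1 f) (hg : ContDiff ℝ 2 g)
    (hfx : Periodic f (0, 1, 0)) (hfy : Periodic f (0, 0, 1))
    (hgx : Periodic g (0, 1, 0)) (hgy : Periodic g (0, 0, 1)) (t : ℝ) :
    ∫ q in Icc (0 : ℝ) 1 ×ˢ Icc (0 : ℝ) 1, jacBracket f g (t, q.1, q.2) = 0 := by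
  have hu : ContDiff ℝ 1 (fun q => f q * pdy g q) := hf.mul (contDiff_pdy hg le_rfl)
  have hv : ContDiff ℝ 1 (fun q => f q * pdx g q) := hf.mul (contDiff_pdx hg le_rfl)
  have hsq : IsCompact (Icc (0 : ℝ) 1 ×ˢ Icc (0 : ℝ) 1) := isCompact_Icc.prod isCompact_Icc
  simp only [jacBracket_eq_pdx_sub_pdy ((hf.differentiable one_ne_zero) _) hg]
  rw [integral_sub (integrableOn_slice (continuous_pdx hu) hsq t)
      (integrableOn_slice (continuous_pdy hv) hsq t),
    integral_pdx_eq_zero hu (hfx.mul (periodic_pdy hgx)) t,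
    integral_pdy_eq_zero hv (hfy.mul (periodic_pdx hgy)) t, sub_zero]

theorem hasDerivAt_setIntegral_slice (hf : ContDiff ℝ 1 f) {K : Set (ℝ × ℝ)} (hK : IsCompact K)
    (t : ℝ) :
    HasDerivAt (fun s => ∫ q in K, f (s, q.1, q.2)) (∫ q in K, pdt f (t, q.1, q.2)) t := by
  obtain ⟨C, hC⟩ := ((isCompact_closedBall t 1).prod hK).exists_bound_of_continuousOn
    (f := fun z : ℝ × ℝ × ℝ => pdt f (z.1, z.2.1, z.2.2))
    ((continuous_pdt hf).comp (by fun_prop)).continuousOn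
  have hdiff := hf.differentiable one_ne_zero
  refine (hasDerivAt_integral_of_dominated_loc_of_deriv_le (bound := fun _ => C)
    (Metric.ball_mem_nhds t one_pos)
    (Eventually.of_forall fun s => (integrableOn_slice hf.continuous hK s).aestronglyMeasurable)
    (integrableOn_slice hf.continuous hK t)
    (integrableOn_slice (continuous_pdt hf) hK t).aestronglyMeasurable
    ((ae_restrict_iff' hK.measurableSet).mpr (Eventually.of_forall fun q hq s hs =>
      hC (s, q) ⟨Metric.ball_subset_closedBall hs, hq⟩))
    (integrableOn_const hK.measure_lt_top.ne)
    (Eventually.of_forall fun q s _ => hasDerivAt_pdt (hdiff (s, q.1, q.2)))).2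

end Integrals

section HallMHD

variable {ψ B ω : ℝ × ℝ × ℝ → ℝ} {θ a R : ℝ} {p : ℝ × ℝ × ℝ}

theorem periodic_vorticity {c : ℝ × ℝ × ℝ} (hψ : Periodic ψ c) (hB : Periodic B c) :
    Periodic (fun p => -spatialLap ψ p + a / R * B p) c :=
  ((periodic_spatialLap hψ).comp Neg.neg).add (hB.smul (a / R))

theorem vorticity_equation (hψ : ContDiff ℝ 3 ψ) (hB : ContDiff ℝ 1 B)
    (hω : ω = fun p => -spatialLap ψ p + (a / R) * B p)
    (heq1 : pdt (fun q => -spatialLap ψ q) p + jacBracket (fun q => -spatialLap ψ q) ψ p =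
        -(θ * jacBracket (jacBracket ψ ω) ψ p))
    (heq2 : pdt B p + jacBracket B ψ p = 0) :
    pdt ω p + jacBracket ω ψ p = -(θ * jacBracket (jacBracket ψ ω) ψ p) := by
  have hL : DifferentiableAt ℝ (fun q => -spatialLap ψ q) p :=
    (contDiff_spatialLap hψ (m := 1) (by norm_num)).neg.differentiable one_ne_zero p
  have hB' : DifferentiableAt ℝ B p := hB.differentiable one_ne_zero p
  have haB : DifferentiableAt ℝ (fun q => a / R * B q) p := hB'.const_mul _
  subst hω
  rw [pdt_add hL haB, pdt_const_mul _ hB', jacBracket_add_left hL haB,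
    jacBracket_const_mul_left _ hB']
  linear_combination heq1 + a / R * heq2

theorem integral_mul_pdt_eq_neg_integral_sq (hψ : ContDiff ℝ 2 ψ) (hω : ContDiff ℝ 2 ω)
    (hψx : Periodic ψ (0, 1, 0)) (hψy : Periodic ψ (0, 0, 1))
    (hωx : Periodic ω (0, 1, 0)) (hωy : Periodic ω (0, 0, 1))
    (hevol : ∀ p, pdt ω p + jacBracket ω ψ p = -(θ * jacBracket (jacBracket ψ ω) ψ p))
    (t : ℝ) :
    ∫ q in Icc (0 : ℝ) 1 ×ˢ Icc (0 : ℝ) 1, ω (t, q.1, q.2) * pdt ω (t, q.1, q.2) =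
      -(θ * ∫ q in Icc (0 : ℝ) 1 ×ˢ Icc (0 : ℝ) 1, jacBracket ψ ω (t, q.1, q.2) ^ 2) := by
  set χ := jacBracket ψ ω
  have hχ : ContDiff ℝ 1 χ := contDiff_jacBracket hψ hω (by norm_num)
  have hω₁ : ContDiff ℝ 1 ω := hω.of_le (by norm_num)
  have hψ₁ : ContDiff ℝ 1 ψ := hψ.of_le (by norm_num)
  have hΦ : ContDiff ℝ 1 (fun q => 2⁻¹ * (ω q * ω q) + θ * (ω q * χ q)) :=
    (contDiff_const.mul (hω₁.mul hω₁)).add (contDiff_const.mul (hω₁.mul hχ))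
  have hpt (p : ℝ × ℝ × ℝ) : ω p * pdt ω p =
      -jacBracket (fun q => 2⁻¹ * (ω q * ω q) + θ * (ω q * χ q)) ψ p - θ * χ p ^ 2 := by
    have hωd := hω.differentiable two_ne_zero p
    have hχd := hχ.differentiable one_ne_zero p
    have hωω := hωd.fun_mul hωd
    have hωχ := hωd.fun_mul hχd
    rw [jacBracket_add_left (hωω.const_mul _) (hωχ.const_mul _),
      jacBracket_const_mul_left _ hωω, jacBracket_const_mul_left _ hωχ,
      jacBracket_mul_left hωd hωd, jacBracket_mul_left hωd hχd, jacBracket_antisymm (f := ω),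
      eq_sub_of_add_eq (hevol p), jacBracket_antisymm (f := ω)]
    ring
  have hsq : IsCompact (Icc (0 : ℝ) 1 ×ˢ Icc (0 : ℝ) 1) := isCompact_Icc.prod isCompact_Icc
  have hχc := hχ.continuous
  have hΦc := (contDiff_jacBracket hΦ hψ₁ (m := 0) (by norm_num)).continuous
  simp only [hpt]
  rw [integral_sub (integrableOn_slice (f := fun p =>
        -jacBracket (fun q => 2⁻¹ * (ω q * ω q) + θ * (ω q * χ q)) ψ p) hΦc.neg hsq t)
      (integrableOn_slice (f := fun p => θ * χ p ^ 2) (by fun_prop) hsq t),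
    integral_neg, integral_const_mul,
    integral_jacBracket_eq_zero hΦ hψ
      (((hωx.mul hωx).smul (2⁻¹ : ℝ)).add ((hωx.mul (periodic_jacBracket hψx hωx)).smul θ))
      (((hωy.mul hωy).smul (2⁻¹ : ℝ)).add ((hωy.mul (periodic_jacBracket hψy hωy)).smul θ)) hψx hψy]
  ring

end HallMHD

theorem statement19_general
    (ψ B : ℝ × ℝ × ℝ → ℝ) (θ a R : ℝ)
    (hψ : ContDiff ℝ (⊤ : ℕ∞) ψ) (hB : ContDiff ℝ (⊤ : ℕ∞) B)
    (hψx : ∀ t x y : ℝ, ψ (t, x + 1, y) = ψ (t, x, y))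
    (hψy : ∀ t x y : ℝ, ψ (t, x, y + 1) = ψ (t, x, y))
    (hBx : ∀ t x y : ℝ, B (t, x + 1, y) = B (t, x, y))
    (hBy : ∀ t x y : ℝ, B (t, x, y + 1) = B (t, x, y))
    (ω : ℝ × ℝ × ℝ → ℝ)
    (hω : ω = fun p => -spatialLap ψ p + (a / R) * B p)
    (heq1 : ∀ p : ℝ × ℝ × ℝ,
      pdt (fun q => -spatialLap ψ q) p + jacBracket (fun q => -spatialLap ψ q) ψ p =
        -(θ * jacBracket (jacBracket ψ ω) ψ p))
    (heq2 : ∀ p : ℝ × ℝ × ℝ, pdt B p + jacBracket B ψ p = 0) :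
    ∀ t : ℝ,
      HasDerivAt
        (fun s => (1 / 2) *
          ∫ q in Set.Icc (0 : ℝ) 1 ×ˢ Set.Icc (0 : ℝ) 1, (ω (s, q.1, q.2)) ^ 2)
        (-(θ * ∫ q in Set.Icc (0 : ℝ) 1 ×ˢ Set.Icc (0 : ℝ) 1,
            (jacBracket ψ ω (t, q.1, q.2)) ^ 2)) t := by
  intro t
  have hψ₃ : ContDiff ℝ 3 ψ := hψ.of_le (by norm_cast)
  have hω₂ : ContDiff ℝ 2 ω := hω ▸ (contDiff_spatialLap hψ (m := 2) (by norm_cast)).neg.add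
    (contDiff_const.mul (hB.of_le (by norm_cast)))
  have hψx' := periodic_x_of_forall_add_one hψx
  have hψy' := periodic_y_of_forall_add_one hψy
  have hωx : Periodic ω (0, 1, 0) :=
    hω ▸ periodic_vorticity hψx' (periodic_x_of_forall_add_one hBx)
  have hωy : Periodic ω (0, 0, 1) :=
    hω ▸ periodic_vorticity hψy' (periodic_y_of_forall_add_one hBy)
  have hevol p := vorticity_equation hψ₃ (hB.of_le (by norm_cast)) hω (heq1 p) (heq2 p)
  refine ((hasDerivAt_setIntegral_slice (f := fun p => ω p ^ 2) (K := Icc 0 1 ×ˢ Icc 0 1)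
    ((hω₂.pow 2).of_le one_le_two) (isCompact_Icc.prod isCompact_Icc) t).const_mul
      (1 / 2)).congr_deriv ?_
  simp only [pdt_sq (hω₂.differentiable two_ne_zero _), integral_const_mul]
  rw [integral_mul_pdt_eq_neg_integral_sq (hψ₃.of_le (by norm_num)) hω₂ hψx' hψy' hωx hωy hevol t]
  ring

/-- For smooth, spatially `1`-periodic solutions of the Casimir-dissipative
equations of 2D incompressible Hall MHD with `𝐁 = B ẑ` normal to the plane, enstrophy
Casimir `½∫ω²` (L = Id), with ion charge-to-mass ratio `a`, Hall parameter `R ≠ 0`, and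
`ω = −Δψ + (a/R)B`: `∂ₜ(−Δψ) + {−Δψ, ψ} = −θ{{ψ, ω}, ψ}`, `∂ₜB + {B, ψ} = 0`, the Casimir
decays at the rate `d/dt (½∫ω²) = −θ ∫ {ψ, ω}²` (integrals over the unit square). -/
theorem statement19
    (ψ B : ℝ × ℝ × ℝ → ℝ) (θ a R : ℝ) (hR : R ≠ 0)
    (hψ : ContDiff ℝ (⊤ : ℕ∞) ψ) (hB : ContDiff ℝ (⊤ : ℕ∞) B)
    (hψx : ∀ t x y : ℝ, ψ (t, x + 1, y) = ψ (t, x, y))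
    (hψy : ∀ t x y : ℝ, ψ (t, x, y + 1) = ψ (t, x, y))
    (hBx : ∀ t x y : ℝ, B (t, x + 1, y) = B (t, x, y))
    (hBy : ∀ t x y : ℝ, B (t, x, y + 1) = B (t, x, y))
    (ω : ℝ × ℝ × ℝ → ℝ)
    (hω : ω = fun p => -spatialLap ψ p + (a / R) * B p)
    (heq1 : ∀ p : ℝ × ℝ × ℝ,
      pdt (fun q => -spatialLap ψ q) p + jacBracket (fun q => -spatialLap ψ q) ψ p =
        -(θ * jacBracket (jacBracket ψ ω) ψ p))
    (heq2 : ∀ p : ℝ × ℝ × ℝ, pdt B p + jacBracket B ψ p = 0) :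
    ∀ t : ℝ,
      HasDerivAt
        (fun s => (1 / 2) *
          ∫ q in Set.Icc (0 : ℝ) 1 ×ˢ Set.Icc (0 : ℝ) 1, (ω (s, q.1, q.2)) ^ 2)
        (-(θ * ∫ q in Set.Icc (0 : ℝ) 1 ×ˢ Set.Icc (0 : ℝ) 1,
            (jacBracket ψ ω (t, q.1, q.2)) ^ 2)) t :=
  statement19_general ψ B θ a R hψ hB hψx hψy hBx hBy ω hω heq1 heq2
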